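/- The function h(φ) = (1+φ)∫_{1/2}^{φ/(1+φ)} ((1−v)/v)^κ e^{κ/v} dv satisfies the homogeneous equation λ(1+φ) h'(φ) + (μ²/2) φ² h''(φ) − λ h(φ) = 0 on (0,∞), as does the function φ ↦ 1 + φ. -/

import Mathlib

/-!
With `v = φ/(1+φ)` and `F' = f`, the function `H φ = (1+φ) F(φ/(1+φ))` has
`H' = F(v) + f(v)/(1+φ)`, in which the `F` terms cancel in the ODE, and `H'' = f'(v)/(1+φ)³`.
The integrand `f(v) = ((1-v)/v)^κ e^{κ/v}` satisfies `v²(1-v) f' = -κ f`, which makes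
`φ² H'' = -κ f(v)`, and `(μ²/2) κ = λ` cancels it against `λ(1+φ) · f(v)/(1+φ)`.
-/

open Real Set intervalIntegral

noncomputable def integrand (κ v : ℝ) : ℝ := ((1 - v) / v) ^ κ * exp (κ / v)

lemma hasDerivAt_integrand (κ : ℝ) {v : ℝ} (hv : v ∈ Ioo (0 : ℝ) 1) :
    HasDerivAt (integrand κ) (-κ * integrand κ v / (v ^ 2 * (1 - v))) v := by
  obtain ⟨hv0, hv1⟩ := hv
  have hbase_pos : 0 < (1 - v) / v := div_pos (by linarith) hv0
  have hbase : HasDerivAt (fun v : ℝ => (1 - v) / v) (-1 / v ^ 2) v := by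
    refine (((hasDerivAt_id v).const_sub 1).div (hasDerivAt_id v) hv0.ne').congr_deriv ?_
    simp only [id_eq]
    ring
  have hquot : HasDerivAt (fun v : ℝ => κ / v) (-κ / v ^ 2) v := by
    refine ((hasDerivAt_inv hv0.ne').const_mul κ).congr_deriv ?_
    ring
  refine ((hbase.rpow_const (p := κ) (Or.inl hbase_pos.ne')).mul hquot.exp).congr_deriv ?_
  rw [rpow_sub hbase_pos, rpow_one, integrand]
  field_simp
  ring

lemma continuousOn_integrand (κ : ℝ) : ContinuousOn (integrand κ) (Ioo 0 1) :=
  fun _ hv => (hasDerivAt_integrand κ hv).continuousAt.continuousWithinAt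

lemma hasDerivAt_integral_integrand (κ : ℝ) {x : ℝ} (hx : x ∈ Ioo (0 : ℝ) 1) :
    HasDerivAt (fun x => ∫ v in (1 / 2 : ℝ)..x, integrand κ v) (integrand κ x) x := by
  have hsub : uIcc (1 / 2 : ℝ) x ⊆ Ioo 0 1 :=
    ordConnected_Ioo.uIcc_subset (by norm_num) hx
  exact integral_hasDerivAt_right ((continuousOn_integrand κ).mono hsub).intervalIntegrable
    ((continuousOn_integrand κ).stronglyMeasurableAtFilter isOpen_Ioo x hx)
    (continuousOn_integrand κ |>.continuousAt (isOpen_Ioo.mem_nhds hx))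

lemma div_one_add_mem_Ioo {φ : ℝ} (hφ : 0 < φ) : φ / (1 + φ) ∈ Ioo (0 : ℝ) 1 :=
  ⟨by positivity, (div_lt_one (by linarith)).2 (by linarith)⟩

lemma hasDerivAt_div_one_add {x : ℝ} (hx : 1 + x ≠ 0) :
    HasDerivAt (fun x : ℝ => x / (1 + x)) (1 / (1 + x) ^ 2) x := by
  refine ((hasDerivAt_id x).div ((hasDerivAt_id x).const_add 1) hx).congr_deriv ?_
  simp only [id_eq]
  field_simp
  ring

section Transform

variable {F f : ℝ → ℝ} {x c d : ℝ}

lemma hasDerivAt_one_add_mul_comp_div_one_add (hx : 1 + x ≠ 0)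
    (hF : HasDerivAt F c (x / (1 + x))) :
    HasDerivAt (fun x => (1 + x) * F (x / (1 + x))) (F (x / (1 + x)) + c / (1 + x)) x := by
  refine (((hasDerivAt_id x).const_add 1).mul
    (hF.comp x (hasDerivAt_div_one_add hx))).congr_deriv ?_
  simp only [Function.comp_apply, id_eq]
  field_simp

lemma hasDerivAt_comp_div_one_add_add_div (hx : 1 + x ≠ 0)
    (hF : HasDerivAt F (f (x / (1 + x))) (x / (1 + x))) (hf : HasDerivAt f d (x / (1 + x))) :
    HasDerivAt (fun x => F (x / (1 + x)) + f (x / (1 + x)) / (1 + x)) (d / (1 + x) ^ 3) x := by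
  have hg := hasDerivAt_div_one_add hx
  refine ((hF.comp x hg).add
    ((hf.comp x hg).div ((hasDerivAt_id x).const_add 1) hx)).congr_deriv ?_
  simp only [Function.comp_apply, id_eq]
  field_simp
  ring

theorem ode_one_add_mul_comp_div_one_add {κ lam μ : ℝ} (hκ : μ ^ 2 / 2 * κ = lam)
    (hF : ∀ v ∈ Ioo (0 : ℝ) 1, HasDerivAt F (f v) v)
    (hf : ∀ v ∈ Ioo (0 : ℝ) 1, HasDerivAt f (-κ * f v / (v ^ 2 * (1 - v))) v)
    {φ : ℝ} (hφ : 0 < φ) :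
    let H := fun x => (1 + x) * F (x / (1 + x))
    lam * (1 + φ) * deriv H φ + μ ^ 2 / 2 * φ ^ 2 * deriv (deriv H) φ - lam * H φ = 0 := by
  intro H
  have hderiv : ∀ x, 0 < x → deriv H x = F (x / (1 + x)) + f (x / (1 + x)) / (1 + x) :=
    fun x hx => (hasDerivAt_one_add_mul_comp_div_one_add (by positivity)
      (hF _ (div_one_add_mem_Ioo hx))).deriv
  have hderiv2 : deriv (deriv H) φ = -κ * f (φ / (1 + φ)) / φ ^ 2 := by
    have hv := div_one_add_mem_Ioo hφ
    have hev : deriv H =ᶠ[nhds φ] fun x => F (x / (1 + x)) + f (x / (1 + x)) / (1 + x) :=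
      Filter.eventually_of_mem (Ioi_mem_nhds hφ) hderiv
    rw [hev.deriv_eq,
      (hasDerivAt_comp_div_one_add_add_div (by positivity) (hF _ hv) (hf _ hv)).deriv]
    have : (1 : ℝ) - φ / (1 + φ) = 1 / (1 + φ) := by field_simp; ring
    rw [this]
    field_simp
  rw [hderiv φ hφ, hderiv2, ← hκ]
  field_simp
  ring

end Transform

theorem stmt12_general (lam μ : ℝ) (hμ : μ ≠ 0)
    (κ : ℝ) (hκ : κ = 2 * lam / μ ^ 2)
    (h : ℝ → ℝ)
    (hh : ∀ φ : ℝ, h φ =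
      (1 + φ) * ∫ v in (1/2 : ℝ)..(φ / (1 + φ)),
        ((1 - v) / v) ^ κ * Real.exp (κ / v)) :
    (∀ φ ∈ Set.Ioi (0:ℝ),
      lam * (1 + φ) * deriv h φ + μ ^ 2 / 2 * φ ^ 2 * deriv (deriv h) φ
        - lam * h φ = 0) ∧
    (∀ φ ∈ Set.Ioi (0:ℝ),
      lam * (1 + φ) * deriv (fun x : ℝ => 1 + x) φ
        + μ ^ 2 / 2 * φ ^ 2 * deriv (deriv (fun x : ℝ => 1 + x)) φ
        - lam * (1 + φ) = 0) := by
  have hκ' : μ ^ 2 / 2 * κ = lam := by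
    rw [hκ]
    field_simp
  have hh' : h = fun x => (1 + x) * ∫ v in (1 / 2 : ℝ)..(x / (1 + x)), integrand κ v :=
    funext hh
  refine ⟨fun φ hφ => ?_, fun φ _ => ?_⟩
  · rw [hh']
    exact ode_one_add_mul_comp_div_one_add hκ' (fun v hv => hasDerivAt_integral_integrand κ hv)
      (fun v hv => hasDerivAt_integrand κ hv) hφ
  · simp

/-- both `h(φ) = (1+φ)∫_{1/2}^{φ/(1+φ)} ((1−v)/v)^κ e^{κ/v} dv`
and the affine function `φ ↦ 1+φ` solve the homogeneous ODE
`λ(1+φ) y' + (μ²/2) φ² y'' − λ y = 0` on `(0,∞)`. -/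
theorem stmt12 (lam μ : ℝ) (hlam : 0 < lam) (hμ : μ ≠ 0)
    (κ : ℝ) (hκ : κ = 2 * lam / μ ^ 2)
    (h : ℝ → ℝ)
    (hh : ∀ φ : ℝ, h φ =
      (1 + φ) * ∫ v in (1/2 : ℝ)..(φ / (1 + φ)),
        ((1 - v) / v) ^ κ * Real.exp (κ / v)) :
    (∀ φ ∈ Set.Ioi (0:ℝ),
      lam * (1 + φ) * deriv h φ + μ ^ 2 / 2 * φ ^ 2 * deriv (deriv h) φ
        - lam * h φ = 0) ∧
    (∀ φ ∈ Set.Ioi (0:ℝ),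
      lam * (1 + φ) * deriv (fun x : ℝ => 1 + x) φ
        + μ ^ 2 / 2 * φ ^ 2 * deriv (deriv (fun x : ℝ => 1 + x)) φ
        - lam * (1 + φ) = 0) :=
  stmt12_general lam μ hμ κ hκ h hh
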